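/- arXiv:2011.11138 — 3 statements merged into one kernel-verified Lean document; each statement's English description precedes it below -/
import Mathlib

section
/- Let τ, γ, a be real numbers with γ ≠ 1 and a ≠ 1 − γ. Consider the equation in the unknown τ′: τ′ = (1 − α − a − β)·τ + α·(((τ − 1)/2 + 1)/(1 − γ) + 1) + a·(1 + 1/(1 − γ)) + β·(τ + 1/(1 − γ)), where α = (τ − 1)·a and β = (τ′ − 1)·a. This equation has a unique real solution τ′, given in closed form by τ′ = τ + a·((2γ − 1)·τ² + 2(2 − γ)·τ − 1) / (2(1 − γ − a)). -/
/-- The mini-slot AD-F recursion equation, with `α = (τ - 1)·a` and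
`β = (τ' - 1)·a`, has a unique real solution `τ'`, given in closed form by
`τ' = τ + a·((2γ - 1)τ² + 2(2 - γ)τ - 1)/(2(1 - γ - a))`. -/
theorem stmt_0 (τ γ a : ℝ) (hγ : γ ≠ 1) (ha : a ≠ 1 - γ) :
    ∀ τ' : ℝ,
      (τ' = (1 - (τ - 1) * a - a - (τ' - 1) * a) * τ
          + ((τ - 1) * a) * (((τ - 1) / 2 + 1) / (1 - γ) + 1)
          + a * (1 + 1 / (1 - γ))
          + ((τ' - 1) * a) * (τ + 1 / (1 - γ)))
      ↔ τ' = τ + a * ((2 * γ - 1) * τ ^ 2 + 2 * (2 - γ) * τ - 1)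
              / (2 * (1 - γ - a)) := by
  intro τ'
  have h1 : (1:ℝ) - γ ≠ 0 := sub_ne_zero.mpr (Ne.symm hγ)
  have h2 : (1:ℝ) - γ - a ≠ 0 := fun h => ha (by linarith)
  field_simp
  constructor <;> intro h
  · refine mul_left_cancel₀ h1 ?_
    linear_combination (1 - γ) * h
  · linear_combination h
end

section
/- Let A > 0 and T_x > 0 be real numbers, and let (λ_i)_{i∈I} be a finite family of nonnegative reals and (c_i)_{i∈I} a family of reals with c_i ≥ 1/2 for all i. Assume T_x·Σ_i λ_i < 1. Then there exists a unique real T > 0 satisfying the fixed-point equation T = A + T_x·T·Σ_i λ_i/(1 + T·λ_i·c_i), and this solution satisfies T ≥ A. -/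
/-- For `A > 0`, `T_x > 0`, a finite family `λ_i ≥ 0`, `c_i ≥ 1/2`,
with `T_x·Σ λ_i < 1`, there is a unique real `T > 0` satisfying
`T = A + T_x·T·Σ_i λ_i/(1 + T·λ_i·c_i)`, and this solution satisfies `T ≥ A`. -/
theorem stmt_7 {ι : Type*} (s : Finset ι) (A Tx : ℝ) (lam c : ι → ℝ)
    (hA : 0 < A) (hTx : 0 < Tx)
    (hlam : ∀ i ∈ s, 0 ≤ lam i) (hc : ∀ i ∈ s, 1 / 2 ≤ c i)
    (hsum : Tx * ∑ i ∈ s, lam i < 1) :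
    (∃! T : ℝ, 0 < T ∧
        T = A + Tx * T * ∑ i ∈ s, lam i / (1 + T * lam i * c i)) ∧
    (∀ T : ℝ, 0 < T →
        T = A + Tx * T * ∑ i ∈ s, lam i / (1 + T * lam i * c i) → A ≤ T) := by
  set S : ℝ → ℝ := fun T => ∑ i ∈ s, lam i / (1 + T * lam i * c i) with hS
  set P : ℝ := ∑ i ∈ s, lam i with hPdef
  have hc0 : ∀ i ∈ s, (0:ℝ) ≤ c i := fun i hi => le_trans (by norm_num) (hc i hi)
  have hP : 0 ≤ P := Finset.sum_nonneg hlam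
  have hden : ∀ T : ℝ, 0 ≤ T → ∀ i ∈ s, (0:ℝ) < 1 + T * lam i * c i := by
    intro T hT i hi
    nlinarith [mul_nonneg (mul_nonneg hT (hlam i hi)) (hc0 i hi)]
  have hSnn : ∀ T : ℝ, 0 ≤ T → 0 ≤ S T := by
    intro T hT
    exact Finset.sum_nonneg fun i hi => div_nonneg (hlam i hi) (hden T hT i hi).le
  have hSle : ∀ T : ℝ, 0 ≤ T → S T ≤ P := by
    intro T hT
    apply Finset.sum_le_sum
    intro i hi
    have h1 : (1:ℝ) ≤ 1 + T * lam i * c i := by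
      nlinarith [mul_nonneg (mul_nonneg hT (hlam i hi)) (hc0 i hi)]
    exact div_le_self (hlam i hi) h1
  have hSmono : ∀ T1 T2 : ℝ, 0 ≤ T1 → T1 ≤ T2 → S T2 ≤ S T1 := by
    intro T1 T2 h1 h12
    apply Finset.sum_le_sum
    intro i hi
    rcases (hlam i hi).eq_or_lt with h | h
    · simp [← h]
    · apply div_le_div_of_nonneg_left (hlam i hi) (hden T1 h1 i hi)
      nlinarith [mul_nonneg (hlam i hi) (hc0 i hi)]
  -- uniqueness key: any two solutions satisfy T1 ≤ T2
  have key : ∀ T1 T2 : ℝ, 0 < T1 → 0 < T2 →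
      T1 = A + Tx * T1 * S T1 → T2 = A + Tx * T2 * S T2 → T1 ≤ T2 := by
    intro T1 T2 h1 h2 e1 e2
    by_contra hlt
    push_neg at hlt
    have huv : S T1 ≤ S T2 := hSmono T2 T1 h2.le hlt.le
    have hv : Tx * S T2 < 1 := by
      have := hSle T2 h2.le
      nlinarith
    nlinarith [mul_le_mul_of_nonneg_left huv (mul_nonneg hTx.le h1.le),
      mul_lt_mul_of_pos_right hv (sub_pos.mpr hlt)]
  -- existence via IVT
  have h1P : 0 < 1 - Tx * P := by linarith
  set M : ℝ := A / (1 - Tx * P) with hMdef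
  have hAM : A ≤ M := by
    rw [hMdef, le_div_iff₀ h1P]
    nlinarith [mul_nonneg hTx.le hP]
  have hMeq : M * (1 - Tx * P) = A := div_mul_cancel₀ A h1P.ne'
  set F : ℝ → ℝ := fun T => A + Tx * T * S T - T with hF
  have hcont : ContinuousOn F (Set.Icc A M) := by
    apply ContinuousOn.sub _ continuousOn_id
    apply ContinuousOn.add continuousOn_const
    apply ContinuousOn.mul (by fun_prop)
    apply continuousOn_finset_sum
    intro i hi
    apply ContinuousOn.div continuousOn_const (by fun_prop)
    intro T hT
    exact (hden T (le_trans hA.le hT.1) i hi).ne'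
  have hFA : 0 ≤ F A := by
    have := hSnn A hA.le
    simp only [hF]
    nlinarith [mul_nonneg hTx.le hA.le]
  have hFM : F M ≤ 0 := by
    have hM0 : 0 < M := lt_of_lt_of_le hA hAM
    have := hSle M hM0.le
    simp only [hF]
    nlinarith [mul_nonneg hTx.le hM0.le]
  have hmem : (0:ℝ) ∈ Set.Icc (F M) (F A) := ⟨hFM, hFA⟩
  obtain ⟨T, hTmem, hFT⟩ := intermediate_value_Icc' hAM hcont hmem
  have hTpos : 0 < T := lt_of_lt_of_le hA hTmem.1
  have hTeq : T = A + Tx * T * S T := by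
    simp only [hF] at hFT; linarith
  constructor
  · refine ⟨T, ⟨hTpos, hTeq⟩, ?_⟩
    rintro y ⟨hy, hye⟩
    exact le_antisymm (key y T hy hTpos hye hTeq) (key T y hTpos hy hTeq hye)
  · intro T' hT' he
    have := hSnn T' hT'.le
    nlinarith [mul_nonneg hTx.le hT'.le]
end

section
/- Let τ, γ, a be real numbers with 0 ≤ γ < 1, 0 < a < 1 − γ, and 1 ≤ τ ≤ 3. Then the unique solution τ′ = τ + a·((2γ − 1)·τ² + 2(2 − γ)·τ − 1)/(2(1 − γ − a)) of the mini-slot AD-F recursion satisfies τ′ > τ. -/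
/-- For `0 ≤ γ < 1`, `0 < a < 1 − γ`, `1 ≤ τ ≤ 3`, the unique
solution `τ' = τ + a·((2γ − 1)τ² + 2(2 − γ)τ − 1)/(2(1 − γ − a))` of the
mini-slot AD-F recursion satisfies `τ' > τ`. -/
theorem stmt_9 (τ γ a : ℝ) (hγ0 : 0 ≤ γ) (hγ1 : γ < 1)
    (ha0 : 0 < a) (ha1 : a < 1 - γ) (hτ1 : 1 ≤ τ) (hτ3 : τ ≤ 3)
    (τ' : ℝ)
    (hτ' : τ' = τ + a * ((2 * γ - 1) * τ ^ 2 + 2 * (2 - γ) * τ - 1)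
        / (2 * (1 - γ - a))) :
    τ < τ' := by
  have hden : 0 < 2 * (1 - γ - a) := by linarith
  have hnum : 0 < (2 * γ - 1) * τ ^ 2 + 2 * (2 - γ) * τ - 1 := by
    nlinarith [mul_nonneg hγ0 (mul_nonneg (by linarith : (0:ℝ) ≤ τ - 1) (by linarith : (0:ℝ) ≤ τ)), mul_nonneg (by linarith : (0:ℝ) ≤ τ - 1) (by linarith : (0:ℝ) ≤ 3 - τ)]
  rw [hτ']
  have : 0 < a * ((2 * γ - 1) * τ ^ 2 + 2 * (2 - γ) * τ - 1) / (2 * (1 - γ - a)) :=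
    div_pos (mul_pos ha0 hnum) hden
  linarith
end
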